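/- arXiv:2305.02458 — 3 statements merged into one kernel-verified Lean document; each statement's English description precedes it below -/
import Mathlib

section
/- Let M be an n×n row-stochastic matrix with n ≥ 2. Then the supremum, over all u ∈ ℝ^n with ‖u‖_H ≠ 0, of ‖Mu‖_H / ‖u‖_H equals the Dobrushin ergodicity coefficient δ(M) = 1 − min_{1≤i<j≤n} Σ_{k=1}^n min(M_{ik}, M_{jk}). -/
/-!
Write `m_k = min (M i k) (M j k)`. Then `(Mu)_i - (Mu)_j = ∑ (M i k - m_k) u_k - ∑ (M j k - m_k) u_k`,
and both weight vectors are nonnegative with total mass `1 - ∑ m_k`, so the difference is at most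
`(1 - ∑ m_k) ‖u‖_H`. For the pair `(i, j)` minimising `∑ m_k`, the indicator of `{k | M j k < M i k}`
attains this bound.
-/

/-- Hilbert's seminorm `‖x‖_H = max_i x_i - min_i x_i` on `ℝ^n`. -/
noncomputable def hilbertSeminorm {n : ℕ} (x : Fin n → ℝ) : ℝ :=
  (⨆ i, x i) - (⨅ i, x i)

open Finset Matrix

section HilbertSeminorm

variable {n : ℕ}

theorem sub_le_hilbertSeminorm (x : Fin n → ℝ) (i j : Fin n) : x i - x j ≤ hilbertSeminorm x :=
  sub_le_sub (le_ciSup (Finite.bddAbove_range x) i) (ciInf_le (Finite.bddBelow_range x) j)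

theorem hilbertSeminorm_nonneg [Nonempty (Fin n)] (x : Fin n → ℝ) : 0 ≤ hilbertSeminorm x := by
  simpa using sub_le_hilbertSeminorm x (Classical.arbitrary _) (Classical.arbitrary _)

theorem hilbertSeminorm_le_of_forall_sub_le [Nonempty (Fin n)] {x : Fin n → ℝ} {c : ℝ}
    (h : ∀ i j, x i - x j ≤ c) : hilbertSeminorm x ≤ c := by
  rw [hilbertSeminorm, sub_le_iff_le_add]
  refine ciSup_le fun i => ?_
  rw [← sub_le_iff_le_add']
  exact le_ciInf fun j => by linarith [h i j]

theorem hilbertSeminorm_eq_sub {x : Fin n → ℝ} {a b : Fin n} (ha : ∀ k, x k ≤ x a)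
    (hb : ∀ k, x b ≤ x k) : hilbertSeminorm x = x a - x b :=
  have : Nonempty (Fin n) := ⟨a⟩
  le_antisymm (hilbertSeminorm_le_of_forall_sub_le fun i j => sub_le_sub (ha i) (hb j))
    (sub_le_hilbertSeminorm x a b)

theorem sum_mul_sub_sum_mul_le_mul_hilbertSeminorm {w w' : Fin n → ℝ} (hw : ∀ k, 0 ≤ w k)
    (hw' : ∀ k, 0 ≤ w' k) (hsum : ∑ k, w k = ∑ k, w' k) (u : Fin n → ℝ) :
    ∑ k, w k * u k - ∑ k, w' k * u k ≤ (∑ k, w k) * hilbertSeminorm u := by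
  have hsup : ∑ k, w k * u k ≤ (∑ k, w k) * ⨆ k, u k := by
    rw [sum_mul]
    exact sum_le_sum fun k _ =>
      mul_le_mul_of_nonneg_left (le_ciSup (Finite.bddAbove_range u) k) (hw k)
  have hinf : (∑ k, w' k) * (⨅ k, u k) ≤ ∑ k, w' k * u k := by
    rw [sum_mul]
    exact sum_le_sum fun k _ =>
      mul_le_mul_of_nonneg_left (ciInf_le (Finite.bddBelow_range u) k) (hw' k)
  rw [hilbertSeminorm, mul_sub, hsum] at *
  linarith

end HilbertSeminorm

section StochasticMatrix

variable {n : ℕ} {M : Matrix (Fin n) (Fin n) ℝ}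

theorem sum_min_le_one (hrow : ∀ i, ∑ k, M i k = 1) (i j : Fin n) :
    ∑ k, min (M i k) (M j k) ≤ 1 :=
  hrow i ▸ sum_le_sum fun _ _ => min_le_left _ _

theorem mulVec_sub_mulVec_le (hrow : ∀ i, ∑ k, M i k = 1) (u : Fin n → ℝ) (i j : Fin n) :
    (M *ᵥ u) i - (M *ᵥ u) j ≤ (1 - ∑ k, min (M i k) (M j k)) * hilbertSeminorm u := by
  have hmass : ∀ l, ∑ k, (M l k - min (M i k) (M j k)) = 1 - ∑ k, min (M i k) (M j k) := by
    intro l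
    rw [sum_sub_distrib, hrow]
  have hsplit : (M *ᵥ u) i - (M *ᵥ u) j = ∑ k, (M i k - min (M i k) (M j k)) * u k
      - ∑ k, (M j k - min (M i k) (M j k)) * u k := by
    simp only [mulVec, dotProduct, sub_mul, sum_sub_distrib]
    ring
  rw [hsplit, ← hmass i]
  exact sum_mul_sub_sum_mul_le_mul_hilbertSeminorm (fun k => sub_nonneg.2 (min_le_left _ _))
    (fun k => sub_nonneg.2 (min_le_right _ _)) (by rw [hmass, hmass]) u

theorem hilbertSeminorm_mulVec_le [Nonempty (Fin n)] (hrow : ∀ i, ∑ k, M i k = 1) {δ : ℝ}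
    (hδ₀ : 0 ≤ δ) (hδ : ∀ i j, i ≠ j → 1 - ∑ k, min (M i k) (M j k) ≤ δ) (u : Fin n → ℝ) :
    hilbertSeminorm (M *ᵥ u) ≤ δ * hilbertSeminorm u := by
  refine hilbertSeminorm_le_of_forall_sub_le fun i j => ?_
  rcases eq_or_ne i j with rfl | hij
  · simpa using mul_nonneg hδ₀ (hilbertSeminorm_nonneg u)
  · exact (mulVec_sub_mulVec_le hrow u i j).trans
      (mul_le_mul_of_nonneg_right (hδ i j hij) (hilbertSeminorm_nonneg u))

theorem exists_hilbertSeminorm_eq_one_and_le_hilbertSeminorm_mulVec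
    (hrow : ∀ i, ∑ k, M i k = 1) {i j : Fin n} (hij : i ≠ j) :
    ∃ u, hilbertSeminorm u = 1 ∧
      1 - ∑ k, min (M i k) (M j k) ≤ hilbertSeminorm (M *ᵥ u) := by
  have : Nonempty (Fin n) := ⟨i⟩
  by_cases hpos : ∃ k, M j k < M i k
  · obtain ⟨a, ha⟩ := hpos
    -- both rows have mass one, so row `i` cannot exceed row `j` everywhere
    obtain ⟨b, hb⟩ : ∃ k, M i k ≤ M j k := by
      by_contra! h
      have := sum_lt_sum_of_nonempty univ_nonempty fun k _ => h k
      rw [hrow, hrow] at this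
      exact lt_irrefl _ this
    set u : Fin n → ℝ := fun k => if M j k < M i k then 1 else 0
    refine ⟨u, ?_, ?_⟩
    · have hua : u a = 1 := if_pos ha
      have hub : u b = 0 := if_neg hb.not_gt
      rw [hilbertSeminorm_eq_sub (a := a) (b := b), hua, hub, sub_zero] <;> intro k <;>
        simp only [u, hua, hub] <;> split_ifs <;> norm_num
    · calc 1 - ∑ k, min (M i k) (M j k)
          = ∑ k, (M i k - M j k) * u k := by
            rw [← hrow i, ← sum_sub_distrib]
            refine sum_congr rfl fun k _ => ?_
            by_cases hk : M j k < M i k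
            · simp [u, hk, min_eq_right hk.le]
            · simp [u, hk, min_eq_left (not_lt.1 hk)]
        _ = (M *ᵥ u) i - (M *ᵥ u) j := by
            simp only [mulVec, dotProduct, sub_mul, sum_sub_distrib]
        _ ≤ hilbertSeminorm (M *ᵥ u) := sub_le_hilbertSeminorm _ i j
  · push Not at hpos
    have hone : ∑ k, min (M i k) (M j k) = 1 :=
      hrow i ▸ sum_congr rfl fun k _ => min_eq_left (hpos k)
    set u : Fin n → ℝ := fun k => if k = i then 1 else 0
    refine ⟨u, ?_, by simpa [hone] using hilbertSeminorm_nonneg _⟩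
    have hui : u i = 1 := if_pos rfl
    have huj : u j = 0 := if_neg hij.symm
    rw [hilbertSeminorm_eq_sub (a := i) (b := j), hui, huj, sub_zero] <;> intro k <;>
      simp only [u, hui, huj] <;> split_ifs <;> norm_num

end StochasticMatrix

theorem dobrushin_coefficient_general {n : ℕ} (hn : 2 ≤ n)
    (M : Matrix (Fin n) (Fin n) ℝ)
    (hrow : ∀ i, ∑ j, M i j = 1) :
    sSup {r : ℝ | ∃ u : Fin n → ℝ, hilbertSeminorm u ≠ 0 ∧
        r = hilbertSeminorm (M.mulVec u) / hilbertSeminorm u} =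
      1 - sInf {s : ℝ | ∃ i j : Fin n, i < j ∧ s = ∑ k, min (M i k) (M j k)} := by
  have : Nonempty (Fin n) := ⟨⟨0, by omega⟩⟩
  set S := {s : ℝ | ∃ i j : Fin n, i < j ∧ s = ∑ k, min (M i k) (M j k)}
  have hSfin : S.Finite := (Set.finite_range fun p : Fin n × Fin n =>
    ∑ k, min (M p.1 k) (M p.2 k)).subset fun s ⟨i, j, _, hs⟩ => ⟨(i, j), hs.symm⟩
  have hSne : S.Nonempty := ⟨_, ⟨0, by omega⟩, ⟨1, by omega⟩, Fin.mk_lt_mk.2 one_pos, rfl⟩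
  obtain ⟨i₀, j₀, hij₀, hmin⟩ := hSne.csInf_mem hSfin
  have hδ : ∀ i j, i ≠ j → 1 - ∑ k, min (M i k) (M j k) ≤ 1 - sInf S := by
    intro i j hij
    rcases hij.lt_or_gt with h | h
    · exact sub_le_sub_left (csInf_le hSfin.bddBelow ⟨i, j, h, rfl⟩) 1
    · simp_rw [min_comm (M i _)]
      exact sub_le_sub_left (csInf_le hSfin.bddBelow ⟨j, i, h, rfl⟩) 1
  have hδ₀ : 0 ≤ 1 - sInf S := hmin ▸ sub_nonneg.2 (sum_min_le_one hrow i₀ j₀)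
  have hbound := hilbertSeminorm_mulVec_le hrow hδ₀ hδ
  obtain ⟨u, hu, hMu⟩ := exists_hilbertSeminorm_eq_one_and_le_hilbertSeminorm_mulVec hrow hij₀.ne
  refine IsGreatest.csSup_eq ⟨⟨u, by simp [hu], ?_⟩, ?_⟩
  · rw [hu, div_one]
    exact le_antisymm (hmin ▸ hMu) (by simpa [hu] using hbound u)
  · rintro r ⟨v, hv, rfl⟩
    exact (div_le_iff₀ ((hilbertSeminorm_nonneg v).lt_of_ne' hv)).2 (hbound v)

/-- Dobrushin's theorem: for a row-stochastic matrix `M` (with `n ≥ 2`), the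
operator seminorm of `M` with respect to Hilbert's seminorm equals the
Dobrushin ergodicity coefficient
`δ(M) = 1 - min_{i<j} Σ_k min(M_{ik}, M_{jk})`. -/
theorem dobrushin_coefficient {n : ℕ} (hn : 2 ≤ n)
    (M : Matrix (Fin n) (Fin n) ℝ)
    (hnn : ∀ i j, 0 ≤ M i j) (hrow : ∀ i, ∑ j, M i j = 1) :
    sSup {r : ℝ | ∃ u : Fin n → ℝ, hilbertSeminorm u ≠ 0 ∧
        r = hilbertSeminorm (M.mulVec u) / hilbertSeminorm u} =
      1 - sInf {s : ℝ | ∃ i j : Fin n, i < j ∧ s = ∑ k, min (M i k) (M j k)} :=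
  dobrushin_coefficient_general hn M hrow
end

section
/- Let 0 < θ ≤ 1, let k ≥ 1, and let Q_1, …, Q_k be n×n row-stochastic matrices such that every nonzero entry of each Q_m is at least θ, and such that every entry of the product Q_1⋯Q_k is strictly positive. Then for every h ∈ ℝ^n, ‖(Q_1⋯Q_k) h‖_H ≤ (1 − n·θ^k) ‖h‖_H. -/
open Matrix Finset

namespace Matrix

section EntryBound

variable {ι R : Type*} [Fintype ι] [DecidableEq ι] [Semiring R] [LinearOrder R]
  [IsStrictOrderedRing R]

lemma list_prod_apply_nonneg {L : List (Matrix ι ι R)} (hnn : ∀ A ∈ L, ∀ i j, 0 ≤ A i j)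
    (i j : ι) : 0 ≤ L.prod i j := by
  induction L generalizing i with
  | nil => by_cases hij : i = j <;> simp [hij]
  | cons A T ih =>
    rw [List.prod_cons, mul_apply]
    exact sum_nonneg fun l _ => mul_nonneg (hnn A List.mem_cons_self i l)
      (ih (fun B hB => hnn B (List.mem_cons_of_mem _ hB)) l)

lemma pow_length_le_list_prod_apply {θ : R} (hθ : 0 ≤ θ)
    {L : List (Matrix ι ι R)} (hnn : ∀ A ∈ L, ∀ i j, 0 ≤ A i j)
    (hmin : ∀ A ∈ L, ∀ i j, A i j ≠ 0 → θ ≤ A i j) {i j : ι} (hpos : 0 < L.prod i j) :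
    θ ^ L.length ≤ L.prod i j := by
  induction L generalizing i with
  | nil =>
    obtain rfl : i = j := by by_contra hij; simp [one_apply_ne hij] at hpos
    simp
  | cons A T ih =>
    have hA := hnn A List.mem_cons_self
    have hTnn : ∀ B ∈ T, ∀ i j, 0 ≤ B i j := fun B hB => hnn B (List.mem_cons_of_mem _ hB)
    have hT := list_prod_apply_nonneg hTnn
    rw [List.prod_cons, mul_apply] at hpos ⊢
    obtain ⟨l, -, hl⟩ := (sum_pos_iff_of_nonneg fun l _ => mul_nonneg (hA i l) (hT l j)).1 hpos
    have hAl : 0 < A i l := pos_of_mul_pos_left hl (hT l j)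
    have hTl : 0 < T.prod l j := pos_of_mul_pos_right hl (hA i l)
    calc θ ^ (A :: T).length = θ * θ ^ T.length := pow_succ' _ _
      _ ≤ A i l * T.prod l j :=
        mul_le_mul (hmin A List.mem_cons_self i l hAl.ne')
          (ih hTnn (fun B hB => hmin B (List.mem_cons_of_mem _ hB)) hTl)
          (pow_nonneg hθ _) hAl.le
      _ ≤ ∑ m, A i m * T.prod m j :=
        single_le_sum (fun m _ => mul_nonneg (hA i m) (hT m j)) (mem_univ l)

end EntryBound

section Contraction

variable {ι : Type*} [Fintype ι] [DecidableEq ι] {P : Matrix ι ι ℝ} {δ : ℝ}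

lemma mulVec_apply_le_of_le_entries (hP : P ∈ rowStochastic ℝ ι) (hδ : ∀ i j, δ ≤ P i j)
    {h : ι → ℝ} {T : ℝ} (hT : ∀ l, h l ≤ T) (i : ι) :
    (P *ᵥ h) i ≤ (1 - Fintype.card ι * δ) * T + δ * ∑ l, h l := by
  calc (P *ᵥ h) i = ∑ l, (P i l - δ) * h l + δ * ∑ l, h l := by
        simp only [mulVec, dotProduct, sub_mul, sum_sub_distrib, mul_sum]; ring
    _ ≤ ∑ l, (P i l - δ) * T + δ * ∑ l, h l := by
        gcongr with l
        · exact sub_nonneg.2 (hδ i l)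
        · exact hT l
    _ = (1 - Fintype.card ι * δ) * T + δ * ∑ l, h l := by
        rw [← sum_mul, sum_sub_distrib, sum_row_of_mem_rowStochastic hP, sum_const, card_univ,
          nsmul_eq_mul]

lemma le_mulVec_apply_of_le_entries (hP : P ∈ rowStochastic ℝ ι) (hδ : ∀ i j, δ ≤ P i j)
    {h : ι → ℝ} {B : ℝ} (hB : ∀ l, B ≤ h l) (i : ι) :
    (1 - Fintype.card ι * δ) * B + δ * ∑ l, h l ≤ (P *ᵥ h) i := by
  have := mulVec_apply_le_of_le_entries hP hδ (h := -h) (T := -B) (fun l => neg_le_neg (hB l)) i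
  simp only [mulVec_neg, Pi.neg_apply, sum_neg_distrib] at this
  linarith

end Contraction

end Matrix

lemma hilbertSeminorm_le_sub_of_bounds {n : ℕ} [NeZero n] {x : Fin n → ℝ} {a b : ℝ}
    (ha : ∀ i, x i ≤ a) (hb : ∀ i, b ≤ x i) : hilbertSeminorm x ≤ a - b :=
  sub_le_sub (ciSup_le ha) (le_ciInf hb)

lemma hilbertSeminorm_mulVec_le_s9 {n : ℕ} [NeZero n] {P : Matrix (Fin n) (Fin n) ℝ} {δ : ℝ}
    (hP : P ∈ rowStochastic ℝ (Fin n)) (hδ : ∀ i j, δ ≤ P i j) (h : Fin n → ℝ) :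
    hilbertSeminorm (P *ᵥ h) ≤ (1 - n * δ) * hilbertSeminorm h := by
  have hT (l : Fin n) : h l ≤ ⨆ i, h i := le_ciSup (Finite.bddAbove_range h) l
  have hB (l : Fin n) : ⨅ i, h i ≤ h l := ciInf_le (Finite.bddBelow_range h) l
  have := hilbertSeminorm_le_sub_of_bounds (mulVec_apply_le_of_le_entries hP hδ hT)
    (le_mulVec_apply_of_le_entries hP hδ hB)
  rw [Fintype.card_fin] at this
  refine this.trans_eq ?_
  rw [hilbertSeminorm]
  ring

theorem product_contraction_of_positive_general {n k : ℕ} (hn : 0 < n)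
    (θ : ℝ) (hθ0 : 0 < θ)
    (Q : Fin k → Matrix (Fin n) (Fin n) ℝ)
    (hnn : ∀ m i j, 0 ≤ Q m i j) (hrow : ∀ m i, ∑ j, Q m i j = 1)
    (hmin : ∀ m i j, Q m i j ≠ 0 → θ ≤ Q m i j)
    (hpos : ∀ i j : Fin n, 0 < (List.ofFn Q).prod i j) :
    ∀ h : Fin n → ℝ,
      hilbertSeminorm ((List.ofFn Q).prod.mulVec h) ≤
        (1 - (n : ℝ) * θ ^ k) * hilbertSeminorm h := by
  have : NeZero n := ⟨hn.ne'⟩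
  have hstoch : (List.ofFn Q).prod ∈ rowStochastic ℝ (Fin n) := by
    refine list_prod_mem fun A hA => ?_
    obtain ⟨m, rfl⟩ := List.mem_ofFn.1 hA
    exact mem_rowStochastic_iff_sum.2 ⟨hnn m, hrow m⟩
  have hentry (i j : Fin n) : θ ^ k ≤ (List.ofFn Q).prod i j := by
    simpa using pow_length_le_list_prod_apply hθ0.le
      (by simpa [List.forall_mem_ofFn_iff] using hnn)
      (by simpa [List.forall_mem_ofFn_iff] using hmin) (hpos i j)
  exact hilbertSeminorm_mulVec_le_s9 hstoch hentry

/-- If `Q_1, …, Q_k` are row-stochastic matrices whose nonzero entries are at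
least `θ`, and the product `Q_1⋯Q_k` has all entries positive, then the product
contracts Hilbert's seminorm with rate `1 - n·θ^k`. -/
theorem product_contraction_of_positive {n k : ℕ} (hn : 0 < n) (hk : 1 ≤ k)
    (θ : ℝ) (hθ0 : 0 < θ) (hθ1 : θ ≤ 1)
    (Q : Fin k → Matrix (Fin n) (Fin n) ℝ)
    (hnn : ∀ m i j, 0 ≤ Q m i j) (hrow : ∀ m i, ∑ j, Q m i j = 1)
    (hmin : ∀ m i j, Q m i j ≠ 0 → θ ≤ Q m i j)
    (hpos : ∀ i j : Fin n, 0 < (List.ofFn Q).prod i j) :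
    ∀ h : Fin n → ℝ,
      hilbertSeminorm ((List.ofFn Q).prod.mulVec h) ≤
        (1 - (n : ℝ) * θ ^ k) * hilbertSeminorm h :=
  product_contraction_of_positive_general hn θ hθ0 Q hnn hrow hmin hpos
end

section
/- Let P be an n×n unichain row-stochastic matrix whose entries are rational numbers with common denominator M ≥ 1 (i.e., M·P has integer entries). Then every invariant measure of P, i.e., every row vector π ∈ ℝ^n with nonnegative entries summing to 1 and πP = π, has all its entries rational with reduced denominator at most n·M^{n−1}. -/
/-- Reachability in the digraph associated to a nonnegative matrix `M`:
there is an arc from `i` to `j` whenever `M i j > 0`. -/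
def Reaches {n : ℕ} (M : Matrix (Fin n) (Fin n) ℝ) : Fin n → Fin n → Prop :=
  Relation.ReflTransGen (fun i j => 0 < M i j)

/-- `C` is a final (strongly connected) class of the digraph of `M`:
it is nonempty, strongly connected, and closed under the arcs of `M`. -/
def IsFinalClass {n : ℕ} (M : Matrix (Fin n) (Fin n) ℝ) (C : Set (Fin n)) : Prop :=
  C.Nonempty ∧ (∀ i ∈ C, ∀ j ∈ C, Reaches M i j) ∧ (∀ i ∈ C, ∀ j, 0 < M i j → j ∈ C)

/-- A nonnegative matrix is unichain if its digraph has a unique final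
strongly connected component. -/
def Unichain {n : ℕ} (M : Matrix (Fin n) (Fin n) ℝ) : Prop :=
  ∃! C : Set (Fin n), IsFinalClass M C

/-!
Let `L = 1 - P`. Since `L` kills the all-ones vector, the columns of `adjugate L` are constant,
so its diagonal `c` (the principal minors `c j = det (1 - P.updateRow j 0)`) satisfies
`c ᵥ* L = 0`, and `∑ j, c j` is the determinant of `L` with one column replaced by ones. That
determinant is nonzero because, for a unichain `P`, an invariant vector with zero sum vanishes
(the positive and negative parts of such a vector are invariant, and their supports would both
contain the unique final class). Hence `π = c / ∑ j, c j`. Each `c j` is `det (1 - Q)` for a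
substochastic `Q`, so it lies in `[0, 1]`, and `M ^ (n - 1) * c j` is an integer, so `π j` is
a quotient of integers whose denominator `M ^ (n - 1) * ∑ j, c j` is at most `n * M ^ (n - 1)`.
-/

open Matrix Finset

section Invariant

variable {ι : Type*} [Fintype ι] [DecidableEq ι] {P : Matrix ι ι ℝ}

lemma sum_vecMul_of_mem_rowStochastic (hP : P ∈ rowStochastic ℝ ι) (v : ι → ℝ) :
    ∑ j, (v ᵥ* P) j = ∑ j, v j := by
  rw [← dotProduct_one, ← dotProduct_mulVec, hP.2, dotProduct_one]

lemma one_sub_mulVec_one_of_mem_rowStochastic (hP : P ∈ rowStochastic ℝ ι) :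
    (1 - P) *ᵥ 1 = 0 := by
  rw [sub_mulVec, one_mulVec, hP.2, sub_self]

/-- `P` preserves the sum of a vector, so the triangle inequality `|v| ≤ |v| ᵥ* P` is an
equality. -/
lemma abs_vecMul_eq_self (hP : P ∈ rowStochastic ℝ ι) {v : ι → ℝ} (hv : v ᵥ* P = v) :
    |v| ᵥ* P = |v| := by
  have hle : ∀ j, |v| j ≤ (|v| ᵥ* P) j := fun j =>
    calc |v| j = |(v ᵥ* P) j| := by rw [hv]; rfl
      _ ≤ ∑ i, |v i * P i j| := abs_sum_le_sum_abs _ _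
      _ = (|v| ᵥ* P) j := by
        simp [vecMul, dotProduct, abs_mul, abs_of_nonneg (hP.1 _ j)]
  funext j
  exact ((sum_eq_sum_iff_of_le fun j _ => hle j).1
    (sum_vecMul_of_mem_rowStochastic hP _).symm j (mem_univ j)).symm

/-- `|v| + v` is a nonnegative invariant vector with the same support as the positive part
of `v`. -/
lemma pos_of_vecMul_eq_self (hP : P ∈ rowStochastic ℝ ι) {v : ι → ℝ} (hv : v ᵥ* P = v)
    {i j : ι} (hi : 0 < v i) (hij : 0 < P i j) : 0 < v j := by
  set u := |v| + v
  have hu : u ᵥ* P = u := by rw [add_vecMul, abs_vecMul_eq_self hP hv, hv]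
  have hpos : ∀ k, 0 < u k ↔ 0 < v k := fun k => by
    simp only [u, Pi.add_apply, Pi.abs_apply]
    constructor <;> intro h <;> cases abs_cases (v k) <;> linarith
  have hu0 : ∀ k, 0 ≤ u k := fun k => by
    simp only [u, Pi.add_apply, Pi.abs_apply]; linarith [neg_abs_le (v k)]
  refine (hpos j).1 ?_
  calc 0 < u i * P i j := mul_pos ((hpos i).2 hi) hij
    _ ≤ ∑ k, u k * P k j :=
      single_le_sum (f := fun k => u k * P k j) (fun k _ => mul_nonneg (hu0 k) (hP.1 k j))
        (mem_univ i)
    _ = u j := congrFun hu j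

end Invariant

def IsArcClosed {n : ℕ} (P : Matrix (Fin n) (Fin n) ℝ) (S : Set (Fin n)) : Prop :=
  ∀ i ∈ S, ∀ j, 0 < P i j → j ∈ S

section Unichain

variable {n : ℕ} {P : Matrix (Fin n) (Fin n) ℝ}

lemma IsArcClosed.mem_of_reaches {S : Set (Fin n)} (hS : IsArcClosed P S) {i j : Fin n}
    (hi : i ∈ S) (hij : Reaches P i j) : j ∈ S := by
  induction hij with
  | refl => exact hi
  | tail _ hjk ih => exact hS _ ih _ hjk

/-- A state of `S` whose set of reachable states is smallest generates a final class. -/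
lemma IsArcClosed.exists_isFinalClass_subset {S : Set (Fin n)} (hS : IsArcClosed P S)
    (hne : S.Nonempty) : ∃ C, IsFinalClass P C ∧ C ⊆ S := by
  obtain ⟨i₀, hi₀, hmin⟩ :=
    Set.exists_min_image S (fun i => {j | Reaches P i j}.ncard) S.toFinite hne
  refine ⟨{j | Reaches P i₀ j}, ⟨⟨i₀, .refl⟩, fun i hi j hj => ?_, fun i hi j hij => hi.tail hij⟩,
    fun j hj => hS.mem_of_reaches hi₀ hj⟩
  have hsub : {k | Reaches P i k} ⊆ {k | Reaches P i₀ k} := fun k hk => hi.trans hk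
  rwa [← Set.eq_of_subset_of_ncard_le hsub (hmin i (hS.mem_of_reaches hi₀ hi)) (Set.toFinite _)]
    at hj

lemma Unichain.inter_nonempty (huni : Unichain P) {S T : Set (Fin n)} (hS : IsArcClosed P S)
    (hT : IsArcClosed P T) (hSne : S.Nonempty) (hTne : T.Nonempty) : (S ∩ T).Nonempty := by
  obtain ⟨C, hC, hCS⟩ := hS.exists_isFinalClass_subset hSne
  obtain ⟨D, hD, hDT⟩ := hT.exists_isFinalClass_subset hTne
  obtain ⟨i, hi⟩ := hC.1
  exact ⟨i, hCS hi, hDT (huni.unique hC hD ▸ hi)⟩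

theorem Unichain.eq_zero_of_vecMul_eq_self (huni : Unichain P)
    (hP : P ∈ rowStochastic ℝ (Fin n)) {v : Fin n → ℝ} (hv : v ᵥ* P = v)
    (hsum : ∑ i, v i = 0) : v = 0 := by
  have hclosed : ∀ w : Fin n → ℝ, w ᵥ* P = w → IsArcClosed P {i | 0 < w i} :=
    fun w hw _ hi _ hij => pos_of_vecMul_eq_self hP hw hi hij
  have hneg : -v ᵥ* P = -v := by rw [neg_vecMul, hv]
  have hsign : ¬ ((∃ i, 0 < v i) ∧ ∃ i, 0 < (-v) i) := fun ⟨hpos, hneg'⟩ => by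
    obtain ⟨i, hi, hi'⟩ := huni.inter_nonempty (hclosed v hv) (hclosed _ hneg) hpos hneg'
    have hi' : 0 < -v i := hi'
    exact lt_asymm hi (neg_pos.1 hi')
  funext i
  rcases not_and_or.1 hsign with h | h <;> push Not at h
  · exact (sum_eq_zero_iff_of_nonpos fun i _ => h i).1 hsum i (mem_univ i)
  · exact (sum_eq_zero_iff_of_nonneg fun i _ => by simpa using h i).1 hsum i (mem_univ i)

theorem Unichain.eq_smul_of_vecMul_eq_self (huni : Unichain P)
    (hP : P ∈ rowStochastic ℝ (Fin n)) {π w : Fin n → ℝ} (hπ : π ᵥ* P = π)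
    (hπ1 : ∑ i, π i = 1) (hw : w ᵥ* P = w) (hw0 : ∑ i, w i ≠ 0) :
    π = (∑ i, w i)⁻¹ • w := by
  refine sub_eq_zero.1 (huni.eq_zero_of_vecMul_eq_self hP ?_ ?_)
  · rw [sub_vecMul, smul_vecMul, hπ, hw]
  · simp [sum_sub_distrib, ← mul_sum, hπ1, inv_mul_cancel₀ hw0]

theorem Unichain.det_updateCol_one_sub_ne_zero (huni : Unichain P)
    (hP : P ∈ rowStochastic ℝ (Fin n)) (r : Fin n) : ((1 - P).updateCol r 1).det ≠ 0 := by
  intro hdet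
  obtain ⟨v, hv0, hv⟩ := exists_vecMul_eq_zero_iff.2 hdet
  rw [vecMul_updateCol] at hv
  have hsum : ∑ i, v i = 0 := by simpa [dotProduct_one] using congrFun hv r
  have hker : ∀ k ≠ r, (v ᵥ* (1 - P)) k = 0 := fun k hk => by simpa [hk] using congrFun hv k
  have hker_r : (v ᵥ* (1 - P)) r = 0 := by
    have htot : ∑ k, (v ᵥ* (1 - P)) k = 0 := by
      rw [← dotProduct_one, ← dotProduct_mulVec, one_sub_mulVec_one_of_mem_rowStochastic hP,
        dotProduct_zero]
    rwa [sum_eq_single r (fun k _ hk => hker k hk) (by simp)] at htot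
  have hinv : v ᵥ* P = v := by
    have h : v ᵥ* (1 - P) = 0 := funext fun k => by
      by_cases hk : k = r
      · exact hk ▸ hker_r
      · exact hker k hk
    rw [vecMul_sub, vecMul_one, sub_eq_zero] at h
    exact h.symm
  exact hv0 (huni.eq_zero_of_vecMul_eq_self hP hinv hsum)

end Unichain

section Adjugate

variable {ι R : Type*} [Fintype ι] [DecidableEq ι] [CommRing R] [IsDomain R] {A : Matrix ι ι R}

lemma det_eq_zero_of_mulVec_one_eq_zero [Nonempty ι] (hA : A *ᵥ 1 = 0) : A.det = 0 :=
  exists_mulVec_eq_zero_iff.1 ⟨1, one_ne_zero, hA⟩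

/-- Replacing the row `i` of `A` by `e_j - e_k` gives a matrix that still kills the all-ones
vector. -/
lemma adjugate_apply_eq_of_mulVec_one_eq_zero (hA : A *ᵥ 1 = 0) (i j k : ι) :
    A.adjugate j i = A.adjugate k i := by
  have : Nonempty ι := ⟨i⟩
  have hzero : (A.updateRow i (Pi.single j 1 - Pi.single k 1)).det = 0 := by
    refine det_eq_zero_of_mulVec_one_eq_zero ?_
    rw [updateRow_mulVec, hA, sub_dotProduct, single_dotProduct, single_dotProduct]
    simp
  rw [adjugate_apply, adjugate_apply, ← sub_add_cancel (Pi.single j 1) (Pi.single k 1),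
    det_updateRow_add, hzero, zero_add]

lemma diag_adjugate_vecMul_eq_zero (hA : A *ᵥ 1 = 0) : A.adjugate.diag ᵥ* A = 0 := by
  funext k
  have : Nonempty ι := ⟨k⟩
  calc (A.adjugate.diag ᵥ* A) k = (A.adjugate * A) k k := by
        simp only [vecMul, dotProduct, diag_apply, mul_apply,
          adjugate_apply_eq_of_mulVec_one_eq_zero hA _ _ k]
    _ = 0 := by simp [adjugate_mul, det_eq_zero_of_mulVec_one_eq_zero hA]

lemma sum_diag_adjugate_eq_det_updateCol (hA : A *ᵥ 1 = 0) (r : ι) :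
    ∑ i, A.adjugate.diag i = (A.updateCol r 1).det := by
  rw [← cramer_apply, cramer_eq_adjugate_mulVec]
  simp only [diag_apply, mulVec, dotProduct, Pi.one_apply, mul_one]
  exact sum_congr rfl fun i _ => adjugate_apply_eq_of_mulVec_one_eq_zero hA i i r

end Adjugate

lemma adjugate_one_sub_apply_self {ι R : Type*} [Fintype ι] [DecidableEq ι] [CommRing R]
    (A : Matrix ι ι R) (i : ι) : (1 - A).adjugate i i = (1 - A.updateRow i 0).det := by
  rw [adjugate_apply]
  congr 1
  ext k l
  by_cases hk : k = i
  · subst hk; simp [one_apply, Pi.single_apply, eq_comm]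
  · simp [updateRow_ne hk]

lemma exists_intCast_pow_mul_det {ι R : Type*} [Fintype ι] [DecidableEq ι] [CommRing R]
    (m : R) (B : Matrix ι ι R) (r : ι) (hr : ∀ j, ∃ z : ℤ, B r j = z)
    (hB : ∀ k ≠ r, ∀ j, ∃ z : ℤ, m * B k j = z) :
    ∃ z : ℤ, m ^ (Fintype.card ι - 1) * B.det = z := by
  set d : ι → R := Function.update (fun _ => m) r 1
  have hd : (diagonal d).det = m ^ (Fintype.card ι - 1) := by
    rw [det_diagonal, prod_update_of_mem (mem_univ r), prod_const, card_sdiff, card_univ]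
    simp
  have hint : ∀ k j, ∃ z : ℤ, (diagonal d * B) k j = z := fun k j => by
    rw [diagonal_mul]
    by_cases hk : k = r
    · subst hk; simpa [d] using hr j
    · simpa [d, hk] using hB k hk j
  choose Z hZ using hint
  refine ⟨det (of Z), ?_⟩
  rw [← hd, ← det_mul, Int.cast_det]
  congr 1
  ext k j
  exact hZ k j

/-- One step of Gaussian elimination on the pivot `A 0 0`. -/
lemma det_succ_eq_mul_det_schur {R : Type*} [Field R] {m : ℕ}
    (A : Matrix (Fin (m + 1)) (Fin (m + 1)) R) (ha : A 0 0 ≠ 0) :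
    A.det = A 0 0 *
      (of fun j k : Fin m => A j.succ k.succ - A j.succ 0 / A 0 0 * A 0 k.succ).det := by
  set c : Fin (m + 1) → R := Fin.cons 0 fun j => A j.succ 0 / A 0 0
  set E := (1 + replicateCol Unit (-c) * replicateRow Unit (Pi.single 0 1 : Fin (m + 1) → R)) * A
  have hE : ∀ i j, E i j = A i j - c i * A 0 j := fun i j => by
    simp [E, add_mul, mul_apply, replicateCol, replicateRow, Pi.single_apply, sub_eq_add_neg]
  have hdet : E.det = A.det := by
    rw [det_mul, det_one_add_replicateCol_mul_replicateRow]
    simp [c]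
  have hcol : ∀ i : Fin m, E i.succ 0 = 0 := fun i => by
    simp [hE, c, div_mul_cancel₀ _ ha]
  rw [← hdet, det_succ_column_zero, Fin.sum_univ_succ]
  simp only [hcol, mul_zero, zero_mul, sum_const_zero, add_zero, Fin.val_zero, pow_zero, one_mul,
    Fin.succAbove_zero]
  congr 2
  · simp [hE, c]
  · ext j k
    simp [hE, c]

/-- Eliminating the first state of a substochastic `Q` leaves the substochastic matrix `Q'`
(the chain watched off state `0`), and `det (1 - Q) = (1 - Q 0 0) * det (1 - Q')`. -/
theorem det_one_sub_mem_Icc {m : ℕ} (Q : Matrix (Fin m) (Fin m) ℝ) (hQ0 : ∀ i j, 0 ≤ Q i j)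
    (hQ1 : ∀ i, ∑ j, Q i j ≤ 1) : (1 - Q).det ∈ Set.Icc 0 1 := by
  induction m with
  | zero => simp
  | succ m ih =>
    set a := 1 - Q 0 0
    have hrow : ∀ i, Q i 0 + ∑ k : Fin m, Q i k.succ ≤ 1 := fun i => by
      simpa [Fin.sum_univ_succ] using hQ1 i
    have hS : ∑ k : Fin m, Q 0 k.succ ≤ a := by linarith [hrow 0]
    rcases (sum_nonneg fun k _ => hQ0 0 _).trans hS |>.eq_or_lt with ha | ha
    · have hQ0k : ∀ k : Fin m, Q 0 k.succ = 0 := fun k =>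
        (sum_eq_zero_iff_of_nonneg fun k _ => hQ0 0 k.succ).1
          (le_antisymm (ha ▸ hS) (sum_nonneg fun k _ => hQ0 0 _)) k (mem_univ k)
      have hzero : ∀ j, (1 - Q) 0 j = 0 := Fin.cases (by simp [a] at ha; simp [← ha])
        fun k => by simp [hQ0k, one_apply, Fin.succ_ne_zero k |>.symm]
      simp [det_eq_zero_of_row_eq_zero 0 hzero]
    · set Q' : Matrix (Fin m) (Fin m) ℝ :=
        of fun j k => Q j.succ k.succ + Q j.succ 0 * Q 0 k.succ / a
      have hdet : (1 - Q).det = a * (1 - Q').det := by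
        rw [det_succ_eq_mul_det_schur _ (by simpa [a] using ha.ne')]
        congr 2
        ext j k
        simp [Q', a, one_apply, (Fin.succ_ne_zero k).symm]
        ring
      have hQ'0 : ∀ j k, 0 ≤ Q' j k := fun j k =>
        add_nonneg (hQ0 _ _) (div_nonneg (mul_nonneg (hQ0 _ _) (hQ0 _ _)) ha.le)
      have hQ'1 : ∀ j, ∑ k, Q' j k ≤ 1 := fun j => by
        have hsum : ∑ k, Q' j k =
            ∑ k : Fin m, Q j.succ k.succ + Q j.succ 0 / a * ∑ k : Fin m, Q 0 k.succ := by
          simp only [Q', of_apply, sum_add_distrib, mul_sum]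
          congr 1
          exact sum_congr rfl fun k _ => by ring
        have hle : Q j.succ 0 / a * ∑ k : Fin m, Q 0 k.succ ≤ Q j.succ 0 :=
          (mul_le_mul_of_nonneg_left hS (div_nonneg (hQ0 _ _) ha.le)).trans_eq
            (div_mul_cancel₀ _ ha.ne')
        linarith [hrow j.succ]
      obtain ⟨h0, h1⟩ := ih Q' hQ'0 hQ'1
      rw [hdet]
      exact ⟨mul_nonneg ha.le h0, mul_le_one₀ (by linarith [hQ0 0 0]) h0 h1⟩

lemma exists_rat_eq_div_sum_den_le {ι : Type*} [Fintype ι] (a : ι → ℤ) (K : ℕ)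
    (ha0 : ∀ j, 0 ≤ a j) (haK : ∀ j, a j ≤ K) (hsum : ∑ j, a j ≠ 0) (i : ι) :
    ∃ q : ℚ, (a i : ℝ) / ∑ j, (a j : ℝ) = q ∧ q.den ≤ Fintype.card ι * K := by
  have hpos : 0 < ∑ j, a j := lt_of_le_of_ne (sum_nonneg fun j _ => ha0 j) (Ne.symm hsum)
  have hle : ∑ j, a j ≤ Fintype.card ι * K := by
    simpa using sum_le_card_nsmul univ a K fun j _ => haK j
  refine ⟨(a i : ℚ) / ∑ j, (a j : ℚ), by push_cast; rfl, ?_⟩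
  have hdvd : ((((a i : ℚ) / ∑ j, (a j : ℚ)).den : ℤ)) ∣ ∑ j, a j := by
    simpa [← Int.cast_sum, Rat.intCast_div_eq_divInt] using Rat.den_dvd (a i) (∑ j, a j)
  exact_mod_cast (Int.le_of_dvd hpos hdvd).trans hle

lemma exists_rat_eq_smul_den_le {ι : Type*} [Fintype ι] {c π : ι → ℝ} (K : ℕ) (hK : 0 < K)
    (hc : ∀ j, c j ∈ Set.Icc 0 1) (hint : ∀ j, ∃ z : ℤ, K * c j = z) (hsum : ∑ j, c j ≠ 0)
    (hπ : π = (∑ j, c j)⁻¹ • c) (i : ι) : ∃ q : ℚ, π i = q ∧ q.den ≤ Fintype.card ι * K := by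
  choose a ha using hint
  have hK' : (0 : ℝ) < K := by exact_mod_cast hK
  have ha0 : ∀ j, 0 ≤ a j := fun j => by
    exact_mod_cast (ha j ▸ mul_nonneg hK'.le (hc j).1 :)
  have haK : ∀ j, a j ≤ K := fun j => by
    exact_mod_cast (ha j ▸ mul_le_of_le_one_right hK'.le (hc j).2 :)
  have ha_sum : ∑ j, a j ≠ 0 := by
    have : ((∑ j, a j : ℤ) : ℝ) = K * ∑ j, c j := by
      push_cast [← ha, mul_sum]
      rfl
    exact_mod_cast this ▸ mul_ne_zero hK'.ne' hsum
  obtain ⟨q, hq, hden⟩ := exists_rat_eq_div_sum_den_le a K ha0 haK ha_sum i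
  refine ⟨q, ?_, hden⟩
  rw [← hq, hπ]
  simp only [← ha, ← mul_sum, Pi.smul_apply, smul_eq_mul]
  field_simp

section Stochastic

variable {ι : Type*} [Fintype ι] [DecidableEq ι] {P : Matrix ι ι ℝ}

lemma diag_adjugate_one_sub_vecMul_eq_self (hP : P ∈ rowStochastic ℝ ι) :
    (1 - P).adjugate.diag ᵥ* P = (1 - P).adjugate.diag := by
  have h := diag_adjugate_vecMul_eq_zero (one_sub_mulVec_one_of_mem_rowStochastic hP)
  rwa [vecMul_sub, vecMul_one, sub_eq_zero, eq_comm] at h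

lemma exists_intCast_pow_mul_det_one_sub_updateRow_zero (M : ℕ)
    (hrat : ∀ i j, ∃ z : ℤ, (M : ℝ) * P i j = z) (i : ι) :
    ∃ z : ℤ, (M : ℝ) ^ (Fintype.card ι - 1) * (1 - P.updateRow i 0).det = z := by
  refine exists_intCast_pow_mul_det (M : ℝ) _ i (fun l => ?_) fun k hk l => ?_
  · exact ⟨if i = l then 1 else 0, by by_cases h : i = l <;> simp [one_apply, h]⟩
  · obtain ⟨z, hz⟩ := hrat k l
    refine ⟨(if k = l then M else 0) - z, ?_⟩
    rw [Matrix.sub_apply, updateRow_ne hk, mul_sub, hz]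
    by_cases h : k = l <;> simp [one_apply, h]

end Stochastic

lemma det_one_sub_updateRow_zero_mem_Icc {n : ℕ} {P : Matrix (Fin n) (Fin n) ℝ}
    (hP : P ∈ rowStochastic ℝ (Fin n)) (i : Fin n) :
    (1 - P.updateRow i 0).det ∈ Set.Icc 0 1 := by
  refine det_one_sub_mem_Icc _ (fun k l => ?_) fun k => ?_
  · by_cases hk : k = i
    · simp [hk]
    · simp [hk, hP.1 k l]
  · by_cases hk : k = i
    · simp [hk]
    · simp [hk, sum_row_of_mem_rowStochastic hP k]

theorem invariant_measure_denominator_bound_general {n : ℕ}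
    (P : Matrix (Fin n) (Fin n) ℝ)
    (hnn : ∀ i j, 0 ≤ P i j) (hrow : ∀ i, ∑ j, P i j = 1)
    (huni : Unichain P)
    (M : ℕ) (hM : 1 ≤ M)
    (hrat : ∀ i j, ∃ z : ℤ, (M : ℝ) * P i j = (z : ℝ))
    (π : Fin n → ℝ) (hπ1 : ∑ i, π i = 1)
    (hinv : Matrix.vecMul π P = π) :
    ∀ i, ∃ q : ℚ, π i = (q : ℝ) ∧ q.den ≤ n * M ^ (n - 1) := by
  intro i
  have hP : P ∈ rowStochastic ℝ (Fin n) := mem_rowStochastic_iff_sum.2 ⟨hnn, hrow⟩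
  set c := (1 - P).adjugate.diag
  have hcj : ∀ j, c j = (1 - P.updateRow j 0).det := adjugate_one_sub_apply_self P
  have hc_sum : ∑ j, c j ≠ 0 := by
    rw [sum_diag_adjugate_eq_det_updateCol (one_sub_mulVec_one_of_mem_rowStochastic hP) i]
    exact huni.det_updateCol_one_sub_ne_zero hP i
  have hπc : π = (∑ j, c j)⁻¹ • c :=
    huni.eq_smul_of_vecMul_eq_self hP hinv hπ1 (diag_adjugate_one_sub_vecMul_eq_self hP) hc_sum
  have hc_int : ∀ j, ∃ z : ℤ, ((M ^ (n - 1) : ℕ) : ℝ) * c j = z := fun j => by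
    simpa [hcj] using exists_intCast_pow_mul_det_one_sub_updateRow_zero M hrat j
  simpa using exists_rat_eq_smul_den_le (M ^ (n - 1)) (pow_pos hM _)
    (fun j => hcj j ▸ det_one_sub_updateRow_zero_mem_Icc hP j) hc_int hc_sum hπc i

/-- Any invariant measure of a unichain row-stochastic matrix with rational
entries of common denominator `M` has rational entries with (reduced)
denominators at most `n·M^{n-1}`. -/
theorem invariant_measure_denominator_bound {n : ℕ} (hn : 0 < n)
    (P : Matrix (Fin n) (Fin n) ℝ)
    (hnn : ∀ i j, 0 ≤ P i j) (hrow : ∀ i, ∑ j, P i j = 1)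
    (huni : Unichain P)
    (M : ℕ) (hM : 1 ≤ M)
    (hrat : ∀ i j, ∃ z : ℤ, (M : ℝ) * P i j = (z : ℝ))
    (π : Fin n → ℝ) (hπ0 : ∀ i, 0 ≤ π i) (hπ1 : ∑ i, π i = 1)
    (hinv : Matrix.vecMul π P = π) :
    ∀ i, ∃ q : ℚ, π i = (q : ℝ) ∧ q.den ≤ n * M ^ (n - 1) :=
  invariant_measure_denominator_bound_general P hnn hrow huni M hM hrat π hπ1 hinv
end
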